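/- arXiv:0906.4586 — 3 statements merged into one kernel-verified Lean document; each statement's English description precedes it below -/
import Mathlib

section
/- Let S be the map ρ ↦ ∑_m M_m ρ M_m† with ∑_m M_m† M_m = I, and let Q be a quantum predicate. If for each m the predicate P_m satisfies tr(P_m σ) ≤ tr(Q S_m(σ)) for all positive σ, where each S_m is a positive trace-non-increasing linear map, then tr((∑_m M_m† P_m M_m) ρ) ≤ tr(Q ∑_m S_m(M_m ρ M_m†)) for all positive ρ. -/
open Matrix ComplexOrder

/-- Soundness of the measurement rule for total correctness. -/
theorem measurement_rule_total {n ι : Type*} [Fintype n] [DecidableEq n] [Fintype ι]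
    (M P : ι → Matrix n n ℂ) (Q : Matrix n n ℂ)
    (hM : ∑ m, (M m)ᴴ * M m = 1)
    (S : ι → Matrix n n ℂ →ₗ[ℂ] Matrix n n ℂ)
    (hSpos : ∀ m, ∀ σ : Matrix n n ℂ, σ.PosSemidef → (S m σ).PosSemidef)
    (hStr : ∀ m, ∀ σ : Matrix n n ℂ, σ.PosSemidef → (S m σ).trace ≤ σ.trace)
    (hPherm : ∀ m, (P m).IsHermitian) (hP0 : ∀ m, (P m).PosSemidef)
    (hP1 : ∀ m, (1 - P m).PosSemidef)
    (hQherm : Q.IsHermitian) (hQ0 : Q.PosSemidef) (hQ1 : (1 - Q).PosSemidef)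
    (hbranch : ∀ m, ∀ σ : Matrix n n ℂ, σ.PosSemidef →
      (P m * σ).trace ≤ (Q * S m σ).trace) :
    ∀ ρ : Matrix n n ℂ, ρ.PosSemidef →
      ((∑ m, (M m)ᴴ * P m * M m) * ρ).trace ≤
        (Q * ∑ m, S m (M m * ρ * (M m)ᴴ)).trace := by
  intro ρ hρ
  rw [Finset.sum_mul, Matrix.trace_sum, Finset.mul_sum, Matrix.trace_sum]
  apply Finset.sum_le_sum
  intro m _
  have h := hbranch m (M m * ρ * (M m)ᴴ) (hρ.mul_mul_conjTranspose_same (M m))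
  calc ((M m)ᴴ * P m * M m * ρ).trace = (P m * (M m * ρ * (M m)ᴴ)).trace := by
        rw [Matrix.mul_assoc, Matrix.mul_assoc, Matrix.trace_mul_comm,
          ← Matrix.mul_assoc, ← Matrix.mul_assoc, Matrix.mul_assoc]
        simp only [Matrix.mul_assoc]
    _ ≤ (Q * S m (M m * ρ * (M m)ᴴ)).trace := h
end

section
/- Soundness of sequential composition for partial correctness: suppose S₁, S₂ are positivity-preserving trace-non-increasing linear maps on operators, and for all positive ρ: tr(P ρ) ≤ tr(Q S₁(ρ)) + (tr(ρ) − tr(S₁(ρ))), and for all positive σ: tr(Q σ) ≤ tr(R S₂(σ)) + (tr(σ) − tr(S₂(σ))). Then for all positive ρ: tr(P ρ) ≤ tr(R S₂(S₁(ρ))) + (tr(ρ) − tr(S₂(S₁(ρ)))). -/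
open Matrix ComplexOrder

theorem seq_rule_partial_general {n : Type*} [Fintype n]
    (P Q R : Matrix n n ℂ)
    (S₁ S₂ : Matrix n n ℂ →ₗ[ℂ] Matrix n n ℂ)
    (hS₁pos : ∀ ρ : Matrix n n ℂ, ρ.PosSemidef → (S₁ ρ).PosSemidef)
    (h1 : ∀ ρ : Matrix n n ℂ, ρ.PosSemidef →
      (P * ρ).trace ≤ (Q * S₁ ρ).trace + (ρ.trace - (S₁ ρ).trace))
    (h2 : ∀ σ : Matrix n n ℂ, σ.PosSemidef →
      (Q * σ).trace ≤ (R * S₂ σ).trace + (σ.trace - (S₂ σ).trace)) :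
    ∀ ρ : Matrix n n ℂ, ρ.PosSemidef →
      (P * ρ).trace ≤ (R * S₂ (S₁ ρ)).trace + (ρ.trace - (S₂ (S₁ ρ)).trace) := by
  intro ρ hρ
  calc (P * ρ).trace ≤ (Q * S₁ ρ).trace + (ρ.trace - (S₁ ρ).trace) := h1 ρ hρ
    _ ≤ (R * S₂ (S₁ ρ)).trace + ((S₁ ρ).trace - (S₂ (S₁ ρ)).trace)
          + (ρ.trace - (S₁ ρ).trace) := by gcongr; exact h2 (S₁ ρ) (hS₁pos ρ hρ)
    _ = (R * S₂ (S₁ ρ)).trace + (ρ.trace - (S₂ (S₁ ρ)).trace) := by ring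

/-- Soundness of sequential composition for partial correctness. -/
theorem seq_rule_partial {n : Type*} [Fintype n] [DecidableEq n]
    (P Q R : Matrix n n ℂ) (hP : P.IsHermitian) (hQ : Q.IsHermitian) (hR : R.IsHermitian)
    (S₁ S₂ : Matrix n n ℂ →ₗ[ℂ] Matrix n n ℂ)
    (hS₁pos : ∀ ρ : Matrix n n ℂ, ρ.PosSemidef → (S₁ ρ).PosSemidef)
    (hS₂pos : ∀ ρ : Matrix n n ℂ, ρ.PosSemidef → (S₂ ρ).PosSemidef)
    (hS₁tr : ∀ ρ : Matrix n n ℂ, ρ.PosSemidef → (S₁ ρ).trace ≤ ρ.trace)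
    (hS₂tr : ∀ ρ : Matrix n n ℂ, ρ.PosSemidef → (S₂ ρ).trace ≤ ρ.trace)
    (h1 : ∀ ρ : Matrix n n ℂ, ρ.PosSemidef →
      (P * ρ).trace ≤ (Q * S₁ ρ).trace + (ρ.trace - (S₁ ρ).trace))
    (h2 : ∀ σ : Matrix n n ℂ, σ.PosSemidef →
      (Q * σ).trace ≤ (R * S₂ σ).trace + (σ.trace - (S₂ σ).trace)) :
    ∀ ρ : Matrix n n ℂ, ρ.PosSemidef →
      (P * ρ).trace ≤ (R * S₂ (S₁ ρ)).trace + (ρ.trace - (S₂ (S₁ ρ)).trace) :=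
  seq_rule_partial_general P Q R S₁ S₂ hS₁pos h1 h2
end

section
/- Fixed-point inequality used in the loop rule: let E₀(ρ) = M₀ρM₀†, E₁(ρ) = M₁ρM₁† with M₀†M₀ + M₁†M₁ = I, and let T be a positivity-preserving trace-non-increasing linear map. If Hermitian P, Q with 0 ⊑ P, Q ⊑ I satisfy tr(Q σ) ≤ tr((M₀†PM₀ + M₁†QM₁) T(σ)) + tr(σ) − tr(T(σ)) for all positive σ, then for every positive ρ and every n ≥ 0: tr((M₀†PM₀ + M₁†QM₁) ρ) ≤ ∑_{k=0}^{n} tr(P (E₀ ∘ (T∘E₁)^k)(ρ)) + tr(Q (E₁ ∘ (T∘E₁)^n)(ρ)) + ∑_{k=0}^{n-1} [tr((E₁ ∘ (T∘E₁)^k)(ρ)) − tr((T∘E₁)^{k+1}(ρ))]. -/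
open Matrix ComplexOrder Finset

/-
Write `F = T ∘ E₁` and `ρₖ = Fᵏ ρ`. Since `tr((M₀ᴴPM₀ + M₁ᴴQM₁) σ) = tr(P E₀ σ) + tr(Q E₁ σ)`,
the hypothesis applied to the positive operator `E₁ ρₖ` bounds `tr(Q E₁ ρₖ)` by
`tr(P E₀ ρₖ₊₁) + tr(Q E₁ ρₖ₊₁) + tr(E₁ ρₖ) − tr(ρₖ₊₁)`; unfolding this bound `N` times gives the claim.
-/

theorem add_le_sum_range_add_sum_range_of_le_succ {α : Type*} [AddCommMonoid α] [PartialOrder α]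
    [IsOrderedAddMonoid α] (a b c : ℕ → α) (h : ∀ k, b k ≤ a (k + 1) + b (k + 1) + c k) (N : ℕ) :
    a 0 + b 0 ≤ ∑ k ∈ range (N + 1), a k + b N + ∑ k ∈ range N, c k := by
  induction N with
  | zero => simp
  | succ N ih =>
    calc a 0 + b 0 ≤ ∑ k ∈ range (N + 1), a k + b N + ∑ k ∈ range N, c k := ih
      _ ≤ ∑ k ∈ range (N + 1), a k + (a (N + 1) + b (N + 1) + c N) + ∑ k ∈ range N, c k := by
        gcongr
        exact h N
      _ = ∑ k ∈ range (N + 2), a k + b (N + 1) + ∑ k ∈ range (N + 1), c k := by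
        simp only [sum_range_succ]
        abel

theorem Matrix.trace_mul_mul_mul_rotate {l m n R : Type*} [Fintype l] [Fintype m] [Fintype n]
    [NonUnitalCommSemiring R] (A : Matrix n l R) (P : Matrix l m R) (B : Matrix m n R)
    (σ : Matrix n n R) : (A * P * B * σ).trace = (P * (B * σ * A)).trace := by
  rw [Matrix.mul_assoc, Matrix.mul_assoc, trace_mul_comm, Matrix.mul_assoc, Matrix.mul_assoc]

theorem loop_fixed_point_ineq_general {n : Type*} [Fintype n]
    (M₀ M₁ P Q : Matrix n n ℂ)
    (E₀ E₁ T : Matrix n n ℂ →ₗ[ℂ] Matrix n n ℂ)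
    (hE₀ : ∀ ρ : Matrix n n ℂ, E₀ ρ = M₀ * ρ * M₀ᴴ)
    (hE₁ : ∀ ρ : Matrix n n ℂ, E₁ ρ = M₁ * ρ * M₁ᴴ)
    (hTpos : ∀ σ : Matrix n n ℂ, σ.PosSemidef → (T σ).PosSemidef)
    (h : ∀ σ : Matrix n n ℂ, σ.PosSemidef →
      (Q * σ).trace ≤ ((M₀ᴴ * P * M₀ + M₁ᴴ * Q * M₁) * T σ).trace
        + σ.trace - (T σ).trace) :
    ∀ ρ : Matrix n n ℂ, ρ.PosSemidef → ∀ N : ℕ,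
      ((M₀ᴴ * P * M₀ + M₁ᴴ * Q * M₁) * ρ).trace ≤
        (∑ k ∈ range (N + 1), (P * E₀ (((T ∘ₗ E₁) ^ k) ρ)).trace)
          + (Q * E₁ (((T ∘ₗ E₁) ^ N) ρ)).trace
          + ∑ k ∈ range N,
              ((E₁ (((T ∘ₗ E₁) ^ k) ρ)).trace - (((T ∘ₗ E₁) ^ (k + 1)) ρ).trace) := by
  intro ρ hρ N
  have hsplit (σ : Matrix n n ℂ) : ((M₀ᴴ * P * M₀ + M₁ᴴ * Q * M₁) * σ).trace
      = (P * E₀ σ).trace + (Q * E₁ σ).trace := by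
    rw [hE₀, hE₁, add_mul, trace_add, trace_mul_mul_mul_rotate, trace_mul_mul_mul_rotate]
  have hE₁pos (σ : Matrix n n ℂ) (hσ : σ.PosSemidef) : (E₁ σ).PosSemidef := by
    rw [hE₁]
    exact hσ.mul_mul_conjTranspose_same M₁
  have hFpos : Set.MapsTo (T ∘ₗ E₁) {σ | σ.PosSemidef} {σ | σ.PosSemidef} :=
    fun σ hσ ↦ hTpos _ (hE₁pos σ hσ)
  have hiter (k : ℕ) : (((T ∘ₗ E₁) ^ k) ρ).PosSemidef := by
    rw [Module.End.pow_apply]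
    exact hFpos.iterate k hρ
  rw [hsplit]
  refine add_le_sum_range_add_sum_range_of_le_succ (fun k ↦ (P * E₀ (((T ∘ₗ E₁) ^ k) ρ)).trace)
    (fun k ↦ (Q * E₁ (((T ∘ₗ E₁) ^ k) ρ)).trace) _ (fun k ↦ ?_) N
  have hstep := h _ (hE₁pos _ (hiter k))
  rw [hsplit, add_sub_assoc] at hstep
  rwa [pow_succ', Module.End.mul_apply, LinearMap.comp_apply]

/-- Fixed-point inequality used in the soundness proof of the loop rule. -/
theorem loop_fixed_point_ineq {n : Type*} [Fintype n] [DecidableEq n]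
    (M₀ M₁ P Q : Matrix n n ℂ) (hM : M₀ᴴ * M₀ + M₁ᴴ * M₁ = 1)
    (E₀ E₁ T : Matrix n n ℂ →ₗ[ℂ] Matrix n n ℂ)
    (hE₀ : ∀ ρ : Matrix n n ℂ, E₀ ρ = M₀ * ρ * M₀ᴴ)
    (hE₁ : ∀ ρ : Matrix n n ℂ, E₁ ρ = M₁ * ρ * M₁ᴴ)
    (hTpos : ∀ σ : Matrix n n ℂ, σ.PosSemidef → (T σ).PosSemidef)
    (hTtr : ∀ σ : Matrix n n ℂ, σ.PosSemidef → (T σ).trace ≤ σ.trace)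
    (hPherm : P.IsHermitian) (hP0 : P.PosSemidef) (hP1 : (1 - P).PosSemidef)
    (hQherm : Q.IsHermitian) (hQ0 : Q.PosSemidef) (hQ1 : (1 - Q).PosSemidef)
    (h : ∀ σ : Matrix n n ℂ, σ.PosSemidef →
      (Q * σ).trace ≤ ((M₀ᴴ * P * M₀ + M₁ᴴ * Q * M₁) * T σ).trace
        + σ.trace - (T σ).trace) :
    ∀ ρ : Matrix n n ℂ, ρ.PosSemidef → ∀ N : ℕ,
      ((M₀ᴴ * P * M₀ + M₁ᴴ * Q * M₁) * ρ).trace ≤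
        (∑ k ∈ range (N + 1), (P * E₀ (((T ∘ₗ E₁) ^ k) ρ)).trace)
          + (Q * E₁ (((T ∘ₗ E₁) ^ N) ρ)).trace
          + ∑ k ∈ range N,
              ((E₁ (((T ∘ₗ E₁) ^ k) ρ)).trace - (((T ∘ₗ E₁) ^ (k + 1)) ρ).trace) :=
  loop_fixed_point_ineq_general M₀ M₁ P Q E₀ E₁ T hE₀ hE₁ hTpos h
end
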